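/- arXiv:1504.01403 — 3 statements merged into one kernel-verified Lean document; each statement's English description precedes it below -/
import Mathlib

section
/- Let G₁ = ⊔_{i=1}^r G_{1i} and G₂ = ⊔_{i=1}^s G_{2i} be finite simple graphs on disjoint vertex sets V₁ = ∪ V_{1i} and V₂ = ∪ V_{2i}, where the G_{1i} and G_{2i} are the connected components and r, s ≥ 2. Let G = G₁ * G₂. If T is a nonempty subset of V₁ ∪ V₂ such that every j ∈ T is a cut point of the induced subgraph of G on ((V₁ ∪ V₂) ∖ T) ∪ {j}, then V₁ ⊆ T or V₂ ⊆ T. -/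
open SimpleGraph

/-- The join `G₁ * G₂` of two graphs on disjoint vertex sets: all edges of `G₁`,
all edges of `G₂`, and all pairs between the two vertex sets. -/
def join {V₁ V₂ : Type*} (G₁ : SimpleGraph V₁) (G₂ : SimpleGraph V₂) :
    SimpleGraph (V₁ ⊕ V₂) where
  Adj x y :=
    match x, y with
    | .inl a, .inl b => G₁.Adj a b
    | .inr a, .inr b => G₂.Adj a b
    | .inl _, .inr _ => True
    | .inr _, .inl _ => True
  symm := ⟨by rintro (a|a) (b|b) h <;> first | exact h.symm | trivial⟩
  loopless := ⟨by rintro (a|a) h <;> exact h.ne rfl⟩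

/-- The number of connected components of the induced subgraph of `G` on `s`. -/
noncomputable def numComp {V : Type*} (G : SimpleGraph V) (s : Set V) : ℕ :=
  Nat.card (G.induce s).ConnectedComponent

/-- `T` has the cut point property for `G`: `T` is nonempty and every `i ∈ T` is a
cut point of the induced subgraph of `G` on `(V ∖ T) ∪ {i}`, i.e. removing `i` from
that induced subgraph strictly increases the number of connected components. -/
def HasCutPointProperty {V : Type*} (G : SimpleGraph V) (T : Set V) : Prop :=
  T.Nonempty ∧ ∀ i ∈ T, numComp G (Tᶜ ∪ {i}) < numComp G Tᶜ

/-!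
If `T` misses a vertex `a` of `V₁` and a vertex `b` of `V₂`, then every vertex of `Tᶜ` or of
`Tᶜ ∪ {j}` is adjacent to `b` or to `a`, and `a` is adjacent to `b`. So both induced subgraphs
are connected, have one component each, and no `j ∈ T` is a cut point.
-/

lemma numComp_eq_one_of_connected {V : Type*} {G : SimpleGraph V} {s : Set V}
    (h : (G.induce s).Connected) : numComp G s = 1 := by
  have := h.preconnected.subsingleton_connectedComponent
  have := h.nonempty.map (G.induce s).connectedComponentMk
  exact Nat.card_eq_one_iff_unique.mpr ⟨inferInstance, inferInstance⟩

lemma join_induce_connected {V₁ V₂ : Type*} (G₁ : SimpleGraph V₁) (G₂ : SimpleGraph V₂)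
    {S : Set (V₁ ⊕ V₂)} {a : V₁} {b : V₂} (ha : .inl a ∈ S) (hb : .inr b ∈ S) :
    ((join G₁ G₂).induce S).Connected := by
  refine (connected_iff_exists_forall_reachable _).mpr ⟨⟨.inr b, hb⟩, ?_⟩
  rintro ⟨u | u, hu⟩
  · exact Adj.reachable (by trivial)
  · exact (Adj.reachable (v := ⟨.inl a, ha⟩) (by trivial)).trans (Adj.reachable (by trivial))

theorem stmt11_general {V₁ V₂ : Type*}
    (G₁ : SimpleGraph V₁) (G₂ : SimpleGraph V₂)
    (T : Set (V₁ ⊕ V₂)) (hT : T.Nonempty)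
    (hcut : ∀ j ∈ T,
      numComp (join G₁ G₂) (Tᶜ ∪ {j}) < numComp (join G₁ G₂) Tᶜ) :
    Set.range Sum.inl ⊆ T ∨ Set.range Sum.inr ⊆ T := by
  by_contra! h
  obtain ⟨_, ⟨a, rfl⟩, ha⟩ := Set.not_subset.mp h.1
  obtain ⟨_, ⟨b, rfl⟩, hb⟩ := Set.not_subset.mp h.2
  obtain ⟨j, hj⟩ := hT
  have hcompl : numComp (join G₁ G₂) Tᶜ = 1 :=
    numComp_eq_one_of_connected (join_induce_connected G₁ G₂ ha hb)
  have hadd : numComp (join G₁ G₂) (Tᶜ ∪ {j}) = 1 :=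
    numComp_eq_one_of_connected (join_induce_connected G₁ G₂ (.inl ha) (.inl hb))
  have hlt := hcut j hj
  omega

theorem stmt11 {V₁ V₂ : Type*} [Fintype V₁] [Fintype V₂] [Nonempty V₁] [Nonempty V₂]
    (G₁ : SimpleGraph V₁) (G₂ : SimpleGraph V₂)
    (h1 : ¬ G₁.Connected) (h2 : ¬ G₂.Connected)
    (T : Set (V₁ ⊕ V₂)) (hT : T.Nonempty)
    (hcut : ∀ j ∈ T,
      numComp (join G₁ G₂) (Tᶜ ∪ {j}) < numComp (join G₁ G₂) Tᶜ) :
    Set.range Sum.inl ⊆ T ∨ Set.range Sum.inr ⊆ T :=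
  stmt11_general G₁ G₂ T hT hcut
end

section
/- Let G be a finite simple graph, v a simplicial vertex of G with neighbors v₁, …, v_t (t ≥ 2), let e = {v, v_t}, and set H = (G ∖ e)_e. Then v is an isolated vertex of the induced subgraph of H on V(G) ∖ {v₁, …, v_{t−1}}, i.e., every neighbor of v in H lies in {v₁, …, v_{t−1}}. -/
/-! Once `e = {v, v_t}` is deleted, `v` is adjacent neither to itself nor to `v_t`, so none of the
edges added in passing to `(G ∖ e)_e` is incident to `v`: the neighbours of `v` in `H` are its
neighbours in `G` other than `v_t`. -/

open SimpleGraph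

/-- For a graph `K` and a pair `{a, b}`, the graph `K_e` on the same vertex set whose
edges are those of `K` together with all pairs `{x, y}` with `x, y ∈ N_K(a)` or
`x, y ∈ N_K(b)`. -/
def extGraph {V : Type*} (K : SimpleGraph V) (a b : V) : SimpleGraph V :=
  K ⊔ SimpleGraph.fromRel (fun x y => (K.Adj a x ∧ K.Adj a y) ∨ (K.Adj b x ∧ K.Adj b y))

theorem extGraph_adj_left_iff {V : Type*} {K : SimpleGraph V} {a b x : V} (hab : ¬ K.Adj a b) :
    (extGraph K a b).Adj a x ↔ K.Adj a x := by
  refine ⟨fun h => ?_, fun h => Or.inl h⟩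
  rcases h with h | ⟨-, ⟨⟨haa, -⟩ | ⟨hba, -⟩⟩ | ⟨⟨-, haa⟩ | ⟨-, hba⟩⟩⟩
  · exact h
  all_goals first
    | exact absurd haa (K.loopless.irrefl a)
    | exact absurd hba.symm hab

theorem deleteEdges_singleton_adj_left_iff {V : Type*} (G : SimpleGraph V) (v b x : V) :
    (G.deleteEdges {s(v, b)}).Adj v x ↔ G.Adj v x ∧ x ≠ b := by
  rw [deleteEdges_adj, Set.mem_singleton_iff, Sym2.congr_right]

theorem stmt17 {V : Type*} (G : SimpleGraph V) (v : V) (t : ℕ) (ht : 2 ≤ t)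
    (w : Fin t → V)
    (hN : G.neighborSet v = Set.range w) :
    ∀ x : V,
      (extGraph (G.deleteEdges {s(v, w ⟨t - 1, by omega⟩)}) v (w ⟨t - 1, by omega⟩)).Adj v x →
        ∃ i : Fin t, (i : ℕ) < t - 1 ∧ x = w i := by
  intro x hx
  rw [extGraph_adj_left_iff (by simp), deleteEdges_singleton_adj_left_iff] at hx
  obtain ⟨hvx, hxb⟩ := hx
  obtain ⟨i, rfl⟩ : x ∈ Set.range w := hN ▸ hvx
  refine ⟨i, ?_, rfl⟩
  have hi : (i : ℕ) ≠ t - 1 := fun h => hxb (congrArg w (Fin.ext h))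
  omega
end

section
/- Let G be a finite simple graph in which every vertex has degree at least 2, and suppose G ∖ v is the disjoint union of two path graphs P_t and P_s on disjoint vertex sets with t, s ≥ 3, where v is adjacent in G to all four endpoints of P_t and P_s. If moreover no neighbor of an endpoint of P_t within P_t is adjacent to v, then there exists a vertex u of G with α_G(u) = 1 while α_G(v) ≥ 6. -/
/-!
`α_G(w)` counts the non-adjacent pairs of neighbours of `w`. The neighbour `u` of an endpoint
`x` of `P_t` is adjacent neither to `v` nor to `P_s`, so `N(u) = {x, z}` with `x, z` non-adjacent,
and `α_G(u) = 1`. The four endpoints of `P_t` and `P_s` are pairwise non-adjacent neighbours of `v`,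
so `α_G(v) ≥ C(4, 2) = 6`.
-/

open SimpleGraph

/-- `H` is a path graph: its vertices can be enumerated `u₀, …, u_{n-1}` so that the
edges are exactly the pairs of consecutive vertices. -/
def IsPathGraph {W : Type*} (H : SimpleGraph W) : Prop :=
  ∃ (n : ℕ) (e : Fin n ≃ W), ∀ a b : Fin n,
    H.Adj (e a) (e b) ↔ ((a : ℕ) + 1 = (b : ℕ) ∨ (b : ℕ) + 1 = (a : ℕ))

/-- An endpoint of a path graph: a vertex with at most one neighbour. -/
def IsEndpoint {W : Type*} (H : SimpleGraph W) (x : W) : Prop :=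
  (H.neighborSet x).Subsingleton

/-- `α_G(v) = C(deg_G(v), 2) − |E(G_{N_G(v)})|`, as an integer. -/
noncomputable def alphaG {V : Type*} (G : SimpleGraph V) (v : V) : ℤ :=
  ((Nat.card (G.neighborSet v)).choose 2 : ℤ) -
    (Nat.card (G.induce (G.neighborSet v)).edgeSet : ℤ)

namespace IsPathGraph

variable {W : Type*} {H : SimpleGraph W} {n : ℕ}

theorem isEndpoint_of_enum {e : Fin n ≃ W}
    (he : ∀ a b : Fin n, H.Adj (e a) (e b) ↔ ((a : ℕ) + 1 = (b : ℕ) ∨ (b : ℕ) + 1 = (a : ℕ)))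
    (i : Fin n) (hi : (i : ℕ) = 0 ∨ (i : ℕ) + 1 = n) : IsEndpoint H (e i) := by
  intro w hw w' hw'
  obtain ⟨j, rfl⟩ := e.surjective w
  obtain ⟨k, rfl⟩ := e.surjective w'
  simp only [mem_neighborSet, he] at hw hw'
  congr 1
  ext
  omega

theorem exists_isEndpoint_ne_not_adj (hH : IsPathGraph H) (h3 : 3 ≤ Nat.card W) :
    ∃ x y, IsEndpoint H x ∧ IsEndpoint H y ∧ x ≠ y ∧ ¬ H.Adj x y := by
  obtain ⟨n, e, he⟩ := hH
  have hn : Nat.card W = n := by simp [← Nat.card_congr e]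
  refine ⟨e ⟨0, by omega⟩, e ⟨n - 1, by omega⟩, isEndpoint_of_enum he _ (.inl rfl),
    isEndpoint_of_enum he _ (.inr (by simp; omega)), ?_, ?_⟩
  · simp [Fin.ext_iff]
    omega
  · simp [he]
    omega

theorem exists_isEndpoint_neighborSet_eq_pair (hH : IsPathGraph H) (h3 : 3 ≤ Nat.card W) :
    ∃ x y z, IsEndpoint H x ∧ H.neighborSet y = {x, z} ∧ x ≠ z ∧ ¬ H.Adj x z := by
  obtain ⟨n, e, he⟩ := hH
  have hn : Nat.card W = n := by simp [← Nat.card_congr e]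
  refine ⟨e ⟨0, by omega⟩, e ⟨1, by omega⟩, e ⟨2, by omega⟩,
    isEndpoint_of_enum he _ (.inl rfl), ?_, by simp [Fin.ext_iff], by simp [he]⟩
  ext w
  obtain ⟨j, rfl⟩ := e.surjective w
  simp only [mem_neighborSet, he, Set.mem_insert_iff, Set.mem_singleton_iff, e.apply_eq_iff_eq,
    Fin.ext_iff]
  omega

end IsPathGraph

namespace SimpleGraph

variable {V : Type*} {G : SimpleGraph V}

theorem isIndepSet_pair {x y : V} (h : ¬ G.Adj x y) : G.IsIndepSet {x, y} :=
  Set.pairwise_pair.2 fun _ ↦ ⟨h, fun h' ↦ h h'.symm⟩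

theorem IsIndepSet.union {s t : Set V} (hs : G.IsIndepSet s) (ht : G.IsIndepSet t)
    (hst : ∀ a ∈ s, ∀ b ∈ t, ¬ G.Adj a b) : G.IsIndepSet (s ∪ t) :=
  Set.pairwise_union.2 ⟨hs, ht, fun a ha b hb _ ↦ ⟨hst a ha b hb, fun h ↦ hst a ha b hb h.symm⟩⟩

theorem neighborSet_eq_image_induce {A : Set V} (x : A) (h : G.neighborSet x ⊆ A) :
    G.neighborSet x = Subtype.val '' (G.induce A).neighborSet x := by
  ext w
  exact ⟨fun hw ↦ ⟨⟨w, h hw⟩, hw, rfl⟩, by rintro ⟨w, hw, rfl⟩; exact hw⟩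

theorem card_edgeSet_top {W : Type*} [Finite W] :
    Nat.card (⊤ : SimpleGraph W).edgeSet = (Nat.card W).choose 2 := by
  classical
  have := Fintype.ofFinite W
  rw [Nat.card_eq_fintype_card, ← edgeFinset_card, card_edgeFinset_top_eq_card_choose_two,
    Nat.card_eq_fintype_card]

theorem card_edgeSet_add_card_edgeSet_compl {W : Type*} [Finite W] (H : SimpleGraph W) :
    Nat.card H.edgeSet + Nat.card Hᶜ.edgeSet = (Nat.card W).choose 2 := by
  simp only [Nat.card_coe_set_eq]
  rw [← Set.ncard_union_eq (disjoint_edgeSet.2 disjoint_compl_right), ← edgeSet_sup,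
    sup_compl_eq_top, ← Nat.card_coe_set_eq, card_edgeSet_top]

theorem alphaG_eq_card_edgeSet_compl {v : V} (hv : (G.neighborSet v).Finite) :
    alphaG G v = Nat.card (G.induce (G.neighborSet v))ᶜ.edgeSet := by
  have := hv.to_subtype
  rw [alphaG, ← card_edgeSet_add_card_edgeSet_compl]
  push_cast
  ring

theorem alphaG_eq_choose_of_isIndepSet {u : V} (h : G.IsIndepSet (G.neighborSet u)) :
    alphaG G u = (Nat.card (G.neighborSet u)).choose 2 := by
  have : (G.induce (G.neighborSet u)).edgeSet = ∅ := by
    ext e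
    induction e using Sym2.ind with
    | _ x y => simpa using fun hxy : G.Adj x y ↦ h x.2 y.2 hxy.ne hxy
  simp [alphaG, this]

theorem choose_le_alphaG_of_isIndepSet {v : V} (hv : (G.neighborSet v).Finite) {s : Set V}
    (hsv : s ⊆ G.neighborSet v) (hs : G.IsIndepSet s) : (s.ncard.choose 2 : ℤ) ≤ alphaG G v := by
  have := hv.to_subtype
  have := hv.subset hsv |>.to_subtype
  let f : (⊤ : SimpleGraph s) ↪g (G.induce (G.neighborSet v))ᶜ :=
    ⟨⟨Set.inclusion hsv, Set.inclusion_injective hsv⟩, by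
      intro x y
      simp only [Function.Embedding.coeFn_mk, compl_adj, top_adj, ne_eq,
        (Set.inclusion_injective hsv).eq_iff, induce_adj]
      exact and_iff_left_of_imp fun hxy ↦ hs x.2 y.2 (Subtype.coe_ne_coe.2 hxy)⟩
  rw [alphaG_eq_card_edgeSet_compl hv, ← Nat.card_coe_set_eq, ← card_edgeSet_top]
  exact_mod_cast Nat.card_le_card_of_injective _ f.mapEdgeSet.injective

theorem exists_subset_neighborSet_ncard_eq_two_isIndepSet {A : Set V} {v : V}
    (hA : IsPathGraph (G.induce A)) (h3 : 3 ≤ Nat.card A)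
    (hend : ∀ x : A, IsEndpoint (G.induce A) x → G.Adj v x) :
    ∃ p ⊆ A, p ⊆ G.neighborSet v ∧ p.ncard = 2 ∧ G.IsIndepSet p := by
  obtain ⟨x, y, hx, hy, hxy, hnadj⟩ := hA.exists_isEndpoint_ne_not_adj h3
  exact ⟨{↑x, ↑y}, Set.pair_subset x.2 y.2, Set.pair_subset (hend x hx) (hend y hy),
    Set.ncard_pair (Subtype.coe_ne_coe.2 hxy), isIndepSet_pair (G := G) (x := x) (y := y) hnadj⟩

theorem exists_alphaG_eq_one {A : Set V} {v : V} (hA : IsPathGraph (G.induce A))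
    (h3 : 3 ≤ Nat.card A) (hout : ∀ x ∈ A, G.neighborSet x ⊆ insert v A)
    (hnbr : ∀ x y : A, IsEndpoint (G.induce A) x → (G.induce A).Adj x y → ¬ G.Adj v y) :
    ∃ u, alphaG G u = 1 := by
  obtain ⟨x, y, z, hx, hy, hxz, hnadj⟩ := hA.exists_isEndpoint_neighborSet_eq_pair h3
  have hxy : (G.induce A).Adj x y := by
    rw [(G.induce A).adj_comm, ← mem_neighborSet, hy]
    exact Set.mem_insert _ _
  have hNy : G.neighborSet y = {↑x, ↑z} := by
    rw [neighborSet_eq_image_induce y, hy, Set.image_pair]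
    intro w hw
    exact (hout y y.2 hw).resolve_left (by rintro rfl; exact hnbr x y hx hxy hw.symm)
  refine ⟨y, ?_⟩
  rw [alphaG_eq_choose_of_isIndepSet (hNy ▸ isIndepSet_pair (G := G) hnadj), hNy,
    Nat.card_coe_set_eq, Set.ncard_pair (Subtype.coe_ne_coe.2 hxz)]
  rfl

end SimpleGraph

theorem stmt18_general {V : Type*} [Fintype V] (G : SimpleGraph V) (v : V)
    (A B : Set V) (hAB : A ∪ B = ({v}ᶜ : Set V)) (hdisj : Disjoint A B)
    (hA : IsPathGraph (G.induce A)) (hB : IsPathGraph (G.induce B))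
    (hcross : ∀ a ∈ A, ∀ b ∈ B, ¬ G.Adj a b)
    (hcardA : 3 ≤ Nat.card A) (hcardB : 3 ≤ Nat.card B)
    (hendA : ∀ x : A, IsEndpoint (G.induce A) x → G.Adj v x)
    (hendB : ∀ x : B, IsEndpoint (G.induce B) x → G.Adj v x)
    (hnbr : ∀ x y : A, IsEndpoint (G.induce A) x → (G.induce A).Adj x y → ¬ G.Adj v y) :
    ∃ u : V, alphaG G u = 1 ∧ 6 ≤ alphaG G v := by
  have hout : ∀ a ∈ A, G.neighborSet a ⊆ insert v A := by
    intro a ha w hw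
    by_cases hwv : w = v
    · exact .inl hwv
    · have hwAB : w ∈ A ∪ B := by rw [hAB]; exact hwv
      exact .inr (hwAB.resolve_right fun hwB ↦ hcross a ha w hwB hw)
  obtain ⟨u, hu⟩ := exists_alphaG_eq_one hA hcardA hout hnbr
  obtain ⟨p, hpA, hpv, hp2, hpi⟩ :=
    exists_subset_neighborSet_ncard_eq_two_isIndepSet hA hcardA hendA
  obtain ⟨q, hqB, hqv, hq2, hqi⟩ :=
    exists_subset_neighborSet_ncard_eq_two_isIndepSet hB hcardB hendB
  have h6 := choose_le_alphaG_of_isIndepSet (Set.toFinite _) (Set.union_subset hpv hqv)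
    (hpi.union hqi fun a ha b hb ↦ hcross a (hpA ha) b (hqB hb))
  rw [Set.ncard_union_eq (hdisj.mono hpA hqB), hp2, hq2] at h6
  exact ⟨u, hu, h6⟩

theorem stmt18 {V : Type*} [Fintype V] (G : SimpleGraph V) (v : V)
    (hdeg : ∀ x : V, 2 ≤ Nat.card (G.neighborSet x))
    (A B : Set V) (hAB : A ∪ B = ({v}ᶜ : Set V)) (hdisj : Disjoint A B)
    (hA : IsPathGraph (G.induce A)) (hB : IsPathGraph (G.induce B))
    (hcross : ∀ a ∈ A, ∀ b ∈ B, ¬ G.Adj a b)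
    (hcardA : 3 ≤ Nat.card A) (hcardB : 3 ≤ Nat.card B)
    (hendA : ∀ x : A, IsEndpoint (G.induce A) x → G.Adj v x)
    (hendB : ∀ x : B, IsEndpoint (G.induce B) x → G.Adj v x)
    (hnbr : ∀ x y : A, IsEndpoint (G.induce A) x → (G.induce A).Adj x y → ¬ G.Adj v y) :
    ∃ u : V, alphaG G u = 1 ∧ 6 ≤ alphaG G v :=
  stmt18_general G v A B hAB hdisj hA hB hcross hcardA hcardB hendA hendB hnbr
end
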